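/- arXiv:1702.07602 — 3 statements merged into one kernel-verified Lean document; each statement's English description precedes it below -/
import Mathlib

section
/- For every ε ∈ (0, π) there exists a constant K > 0 such that |F(z)| = |1/(1 − p·z·T(z)^{p−1})| ≤ K/(1 + |z|)^{1/p} for all z ∈ ℂ_ε. -/
/-!
For `‖z‖ ≥ 2` the equation `z T^p = T - 1` forces `‖T‖ ≤ 1` and `‖z‖ ‖T‖^p ≤ 2`. Multiplying
`1 - p z T^{p-1}` by `T` and using the equation gives `p - (p - 1) T`, whose real part is at
least `1`; hence `‖F‖ ≤ ‖T‖`, and `‖T‖^p (1 + ‖z‖) ≤ 3` is the decay `‖F‖ ≤ 3 / (1 + ‖z‖)^{1/p}`.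
For `‖z‖ ≤ 2` the sector lies in the compact set `{‖z‖ ≤ 2, Re z ≤ cos ε ‖z‖} ⊆ Ω_p`, on which
the continuous function `F` is bounded.
-/

/-- `R_p = (p-1)^(p-1) / p^p`. -/
noncomputable def Rp (p : ℕ) : ℝ :=
  ((p - 1 : ℕ) : ℝ) ^ (p - 1) / (p : ℝ) ^ p

/-- The cut plane `Ω_p = ℂ ∖ [R_p, ∞)`. -/
noncomputable def cutPlane (p : ℕ) : Set ℂ :=
  (Complex.ofReal '' Set.Ici (Rp p))ᶜ

/-- The open sector `ℂ_ε = {z : |arg z| > ε}` (principal argument). -/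
def sector (ε : ℝ) : Set ℂ := {z : ℂ | ε < |Complex.arg z|}

theorem Rp_pos (p : ℕ) : 0 < Rp p := by
  rcases p with _ | _ | p
  · norm_num [Rp]
  · norm_num [Rp]
  · simp only [Rp, Nat.add_sub_cancel]
    positivity

theorem mem_cutPlane_of_re_le_mul_norm (p : ℕ) {c : ℝ} (hc : c < 1) {z : ℂ}
    (hz : z.re ≤ c * ‖z‖) : z ∈ cutPlane p := by
  rintro ⟨x, hx, rfl⟩
  have hx0 : 0 < x := (Rp_pos p).trans_le hx
  rw [Complex.ofReal_re, Complex.norm_of_nonneg hx0.le] at hz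
  nlinarith

theorem re_le_cos_mul_norm_of_mem_sector {ε : ℝ} (hε : 0 ≤ ε) {z : ℂ} (hz : z ∈ sector ε) :
    z.re ≤ Real.cos ε * ‖z‖ := by
  have hcos : Real.cos (Complex.arg z) ≤ Real.cos ε := by
    rw [← Real.cos_abs]
    exact Real.cos_le_cos_of_nonneg_of_le_pi hε (Complex.abs_arg_le_pi z) hz.le
  rw [← Complex.norm_mul_cos_arg, mul_comm]
  exact mul_le_mul_of_nonneg_right hcos (norm_nonneg z)

theorem le_div_rpow_one_div_of_pow_mul_le {a b c : ℝ} {p : ℕ} (hp : p ≠ 0) (ha : 0 ≤ a)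
    (hb : 0 < b) (hc : 0 ≤ c) (h : a ^ p * b ≤ c ^ p) : a ≤ c / b ^ ((1 : ℝ) / p) := by
  rw [le_div_iff₀ (by positivity), ← pow_le_pow_iff_left₀ (by positivity) hc hp, mul_pow,
    one_div, Real.rpow_inv_natCast_pow hb.le hp]
  exact h

theorem le_mul_rpow_div_rpow_of_le {a M x R r : ℝ} (ha : 0 ≤ a) (haM : a ≤ M) (hx : 0 ≤ x)
    (hxR : x ≤ R) (hr : 0 ≤ r) : a ≤ M * (1 + R) ^ r / (1 + x) ^ r := by
  rw [le_div_iff₀ (by positivity)]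
  exact mul_le_mul haM (Real.rpow_le_rpow (by positivity) (by linarith) hr) (by positivity)
    (ha.trans haM)

section FussCatalanEquation

variable {p : ℕ} {z t : ℂ}

theorem fuss_norm_mul_norm_pow_le (h : z * t ^ p - t + 1 = 0) : ‖z‖ * ‖t‖ ^ p ≤ ‖t‖ + 1 := by
  calc ‖z‖ * ‖t‖ ^ p = ‖t - 1‖ := by
        rw [← norm_pow, ← norm_mul, show z * t ^ p = t - 1 by linear_combination h]
    _ ≤ ‖t‖ + 1 := by simpa using norm_sub_le t 1

theorem fuss_norm_le_one (hp : p ≠ 0) (h : z * t ^ p - t + 1 = 0) (hz : 2 ≤ ‖z‖) :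
    ‖t‖ ≤ 1 := by
  by_contra! ht
  nlinarith [fuss_norm_mul_norm_pow_le h, le_self_pow₀ ht.le hp,
    mul_le_mul_of_nonneg_right hz (pow_nonneg (norm_nonneg t) p)]

theorem fuss_one_sub_mul_mul_pow_mul_eq (hp : 1 ≤ p) (h : z * t ^ p - t + 1 = 0) :
    (1 - p * z * t ^ (p - 1)) * t = p - (p - 1) * t := by
  have hpow : t ^ (p - 1) * t = t ^ p := by rw [← pow_succ, Nat.sub_add_cancel hp]
  linear_combination (-(p : ℂ)) * z * hpow - (p : ℂ) * h

theorem fuss_norm_inv_le_norm (hp : 1 ≤ p) (h : z * t ^ p - t + 1 = 0) (ht : t.re ≤ 1) :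
    ‖(1 - p * z * t ^ (p - 1))⁻¹‖ ≤ ‖t‖ := by
  have hre : 1 ≤ ((p : ℂ) - (p - 1) * t).re := by
    have hp' : (1 : ℝ) ≤ p := by exact_mod_cast hp
    simp only [Complex.sub_re, Complex.mul_re, Complex.natCast_re, Complex.natCast_im,
      Complex.one_re, Complex.sub_im, Complex.one_im, sub_zero, zero_mul]
    nlinarith
  have hprod : 1 ≤ ‖1 - p * z * t ^ (p - 1)‖ * ‖t‖ := by
    rw [← norm_mul, fuss_one_sub_mul_mul_pow_mul_eq hp h]
    exact hre.trans (Complex.re_le_norm _)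
  have hpos : 0 < ‖1 - p * z * t ^ (p - 1)‖ :=
    pos_of_mul_pos_left (one_pos.trans_le hprod) (norm_nonneg t)
  rw [norm_inv, inv_le_iff_one_le_mul₀' hpos]
  exact hprod

theorem fuss_norm_inv_le_of_two_le_norm (hp : 1 ≤ p) (h : z * t ^ p - t + 1 = 0)
    (hz : 2 ≤ ‖z‖) : ‖(1 - p * z * t ^ (p - 1))⁻¹‖ ≤ 3 / (1 + ‖z‖) ^ ((1 : ℝ) / p) := by
  have hp0 : p ≠ 0 := by omega
  have ht := fuss_norm_le_one hp0 h hz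
  refine (fuss_norm_inv_le_norm hp h ((Complex.re_le_norm t).trans ht)).trans
    (le_div_rpow_one_div_of_pow_mul_le hp0 (norm_nonneg t) (by positivity) (by norm_num) ?_)
  have htp : ‖t‖ ^ p ≤ 1 := pow_le_one₀ (norm_nonneg t) ht
  have h3 : (3 : ℝ) ≤ 3 ^ p := le_self_pow₀ (by norm_num) hp0
  nlinarith [fuss_norm_mul_norm_pow_le h]

end FussCatalanEquation

/-- Let `T` be analytic on `Ω_p` with `z T(z)^p − T(z) + 1 = 0` and
`1 − p z T(z)^{p−1} ≠ 0` there, and set `F(z) = 1/(1 − p z T(z)^{p−1})`.  Then for every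
`ε ∈ (0, π)` there is `K > 0` with `|F(z)| ≤ K/(1 + |z|)^{1/p}` for all `z ∈ ℂ_ε`. -/
theorem fussCatalan_F_decay (p : ℕ) (hp : 2 ≤ p) (T : ℂ → ℂ)
    (hT : AnalyticOnNhd ℂ T (cutPlane p))
    (heq : ∀ z ∈ cutPlane p, z * T z ^ p - T z + 1 = 0)
    (hne : ∀ z ∈ cutPlane p, 1 - (p : ℂ) * z * T z ^ (p - 1) ≠ 0)
    (ε : ℝ) (hε : ε ∈ Set.Ioo 0 Real.pi) :
    ∃ K : ℝ, 0 < K ∧ ∀ z ∈ sector ε,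
      ‖(1 - (p : ℂ) * z * T z ^ (p - 1))⁻¹‖ ≤ K / (1 + ‖z‖) ^ ((1 : ℝ) / p) := by
  obtain ⟨hε0, hεπ⟩ := hε
  have hcos : Real.cos ε < 1 := by
    simpa using Real.cos_lt_cos_of_nonneg_of_le_pi le_rfl hεπ.le hε0
  set S : Set ℂ := {z | z.re ≤ Real.cos ε * ‖z‖}
  have hS : S ⊆ cutPlane p := fun z hz => mem_cutPlane_of_re_le_mul_norm p hcos hz
  have hF : ContinuousOn (fun z => (1 - (p : ℂ) * z * T z ^ (p - 1))⁻¹) (cutPlane p) :=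
    (continuousOn_const.sub ((continuousOn_const.mul continuousOn_id).mul
      (hT.continuousOn.pow _))).inv₀ hne
  have hcompact : IsCompact (Metric.closedBall (0 : ℂ) 2 ∩ S) :=
    (isCompact_closedBall _ _).inter_right
      (isClosed_le Complex.continuous_re (continuous_const.mul continuous_norm))
  obtain ⟨M, hM⟩ := hcompact.exists_bound_of_continuousOn
    (hF.mono (Set.inter_subset_right.trans hS))
  refine ⟨max 3 (M * (1 + 2) ^ ((1 : ℝ) / p)), lt_max_of_lt_left (by norm_num), fun z hz => ?_⟩
  have hzS : z ∈ S := re_le_cos_mul_norm_of_mem_sector hε0.le hz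
  rcases le_or_gt 2 ‖z‖ with hlarge | hsmall
  · refine (fuss_norm_inv_le_of_two_le_norm (by omega) (heq z (hS hzS)) hlarge).trans ?_
    gcongr
    exact le_max_left _ _
  · refine (le_mul_rpow_div_rpow_of_le (r := 1 / p) (norm_nonneg _)
      (hM z ⟨mem_closedBall_zero_iff.2 hsmall.le, hzS⟩) (norm_nonneg z) hsmall.le
      (by positivity)).trans ?_
    gcongr
    exact le_max_right _ _
end

section
/- There exists a constant K > 0 (depending only on p) such that for every integer q ≥ 1 there exist real numbers a_{q,0}, …, a_{q,q} with Σ_{k=0}^{q} |a_{q,k}| ≤ K^q · q! and such that the q-th derivative of E satisfies E^{(q)}(z) = Σ_{k=0}^{q} a_{q,k} · z^k · E(z)^{q+1+k} for all z ∈ Ω_p. -/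
open Polynomial Finset Filter Topology

namespace Polynomial

section IteratedDerivPoly

variable {R : Type*} [CommSemiring R]

noncomputable def iteratedDerivPoly (α β : R) : ℕ → R[X]
  | 0 => 1
  | q + 1 => ((q : R[X]) + 1) * (C α + C β * X) * iteratedDerivPoly α β q
      + (1 + C α * X + C β * X ^ 2) * derivative (iteratedDerivPoly α β q)

theorem natDegree_iteratedDerivPoly_le (α β : R) (q : ℕ) :
    (iteratedDerivPoly α β q).natDegree ≤ q := by
  induction q with
  | zero => simp [iteratedDerivPoly]
  | succ q ih =>
    have hlin : (((q : R[X]) + 1) * (C α + C β * X)).natDegree ≤ 1 := by compute_degree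
    have hquad : (1 + C α * X + C β * X ^ 2).natDegree ≤ 2 := by compute_degree
    refine natDegree_add_le_of_degree_le ?_ ?_
    · simpa [add_comm] using natDegree_mul_le_of_le hlin ih
    · rcases q with _ | q
      · simp [iteratedDerivPoly]
      · exact (natDegree_mul_le_of_le hquad
          ((natDegree_derivative_le _).trans (Nat.sub_le_sub_right ih 1))).trans (by omega)

end IteratedDerivPoly

noncomputable def l1Norm (P : ℝ[X]) : ℝ := P.sum fun _ a => |a|

theorem l1Norm_nonneg (P : ℝ[X]) : 0 ≤ l1Norm P :=
  sum_nonneg fun _ _ => abs_nonneg _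

theorem l1Norm_eq_sum_range {P : ℝ[X]} {n : ℕ} (hn : P.natDegree < n) :
    l1Norm P = ∑ k ∈ range n, |P.coeff k| :=
  sum_over_range' P (fun _ => abs_zero) n hn

@[simp]
theorem l1Norm_one : l1Norm 1 = 1 := by
  simp [l1Norm_eq_sum_range (P := 1) (n := 1) (by simp)]

theorem l1Norm_add_le (P Q : ℝ[X]) : l1Norm (P + Q) ≤ l1Norm P + l1Norm Q := by
  set n := max P.natDegree Q.natDegree + 1
  rw [l1Norm_eq_sum_range (n := n) (Nat.lt_succ_of_le (natDegree_add_le P Q)),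
    l1Norm_eq_sum_range (n := n) (by omega), l1Norm_eq_sum_range (n := n) (by omega),
    ← sum_add_distrib]
  exact sum_le_sum fun k _ => (coeff_add P Q k).symm ▸ abs_add_le _ _

theorem l1Norm_C_mul (a : ℝ) (P : ℝ[X]) : l1Norm (C a * P) = |a| * l1Norm P := by
  rw [l1Norm_eq_sum_range (n := P.natDegree + 1) (Nat.lt_succ_of_le (natDegree_C_mul_le a P)),
    l1Norm_eq_sum_range (Nat.lt_succ_self _), mul_sum]
  simp [abs_mul]

theorem l1Norm_X_mul (P : ℝ[X]) : l1Norm (X * P) = l1Norm P := by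
  have hdeg : (X * P).natDegree < P.natDegree + 2 := by
    have := natDegree_mul_le (p := X) (q := P)
    rw [natDegree_X] at this
    omega
  rw [l1Norm_eq_sum_range hdeg, sum_range_succ', l1Norm_eq_sum_range (Nat.lt_succ_self _)]
  simp

theorem l1Norm_derivative_le (P : ℝ[X]) :
    l1Norm (derivative P) ≤ P.natDegree * l1Norm P := by
  set n := P.natDegree + 1
  calc l1Norm (derivative P) = ∑ k ∈ range n, |P.coeff (k + 1) * (k + 1)| := by
        have hdeg : (derivative P).natDegree < n :=
          (natDegree_derivative_le P).trans_lt (by omega)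
        rw [l1Norm_eq_sum_range hdeg]
        simp only [coeff_derivative]
    _ ≤ ∑ k ∈ range n, P.natDegree * |P.coeff (k + 1)| := by
        refine sum_le_sum fun k _ => ?_
        rcases le_or_gt (k + 1) P.natDegree with hk | hk
        · rw [abs_mul, mul_comm, abs_of_nonneg (by positivity)]
          gcongr
          exact_mod_cast hk
        · simp [coeff_eq_zero_of_natDegree_lt hk]
    _ ≤ P.natDegree * ∑ k ∈ range (n + 1), |P.coeff k| := by
        rw [sum_range_succ' _ n, mul_add, mul_sum]
        exact le_add_of_nonneg_right (by positivity)
    _ = P.natDegree * l1Norm P := by rw [l1Norm_eq_sum_range (n := n + 1) (by omega)]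

theorem l1Norm_iteratedDerivPoly_le (α β : ℝ) (q : ℕ) :
    l1Norm (iteratedDerivPoly α β q) ≤ (1 + 2 * |α| + 2 * |β|) ^ q * q.factorial := by
  induction q with
  | zero => simp [iteratedDerivPoly]
  | succ q ih =>
    set P := iteratedDerivPoly α β q
    set K := 1 + 2 * |α| + 2 * |β|
    have hexp : iteratedDerivPoly α β (q + 1) = C ((q + 1) * α) * P + C ((q + 1) * β) * (X * P)
        + derivative P + C α * (X * derivative P) + C β * (X * (X * derivative P)) := by
      simp only [iteratedDerivPoly, map_mul, map_add, map_natCast, map_one, P]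
      ring
    have hP' : l1Norm (derivative P) ≤ q * l1Norm P :=
      (l1Norm_derivative_le P).trans <| mul_le_mul_of_nonneg_right
        (by exact_mod_cast natDegree_iteratedDerivPoly_le α β q) (l1Norm_nonneg P)
    have hstep : l1Norm (iteratedDerivPoly α β (q + 1)) ≤ (q + 1) * K * l1Norm P := by
      rw [hexp]
      grw [l1Norm_add_le, l1Norm_add_le, l1Norm_add_le, l1Norm_add_le]
      have hq : |(q : ℝ) + 1| = q + 1 := abs_of_nonneg (by positivity)
      simp only [l1Norm_C_mul, l1Norm_X_mul, abs_mul, hq]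
      nlinarith [abs_nonneg α, abs_nonneg β, l1Norm_nonneg P, q.cast_nonneg (α := ℝ)]
    calc l1Norm (iteratedDerivPoly α β (q + 1)) ≤ (q + 1) * K * (K ^ q * q.factorial) :=
          hstep.trans (by gcongr)
      _ = K ^ (q + 1) * (q + 1).factorial := by
          rw [Nat.factorial_succ, pow_succ]
          push_cast
          ring

end Polynomial

section PolynomialODE

variable {R 𝕜 : Type*} [CommSemiring R] [NontriviallyNormedField 𝕜] [Algebra R 𝕜]
  {E : 𝕜 → 𝕜} {α β : R} {z : 𝕜}

theorem hasDerivAt_pow_mul_aeval (hE : HasDerivAt E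
      (algebraMap R 𝕜 α * E z ^ 2 + algebraMap R 𝕜 β * z * E z ^ 3) z)
    (q : ℕ) (P : R[X]) :
    HasDerivAt (fun z => E z ^ (q + 1) * aeval (z * E z) P)
      (E z ^ (q + 2) * aeval (z * E z) (((q : R[X]) + 1) * (C α + C β * X) * P
        + (1 + C α * X + C β * X ^ 2) * derivative P)) z := by
  refine ((hE.fun_pow (q + 1)).fun_mul
    ((P.hasDerivAt_aeval (z * E z)).comp z ((hasDerivAt_id' z).fun_mul hE))).congr_deriv ?_
  simp only [Function.comp_apply, map_add, map_mul, aeval_C, aeval_X, map_pow, map_one, map_natCast]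
  push_cast
  ring

theorem iteratedDeriv_eq_pow_mul_aeval_iteratedDerivPoly {U : Set 𝕜} (hU : IsOpen U)
    (hE : ∀ z ∈ U, HasDerivAt E
      (algebraMap R 𝕜 α * E z ^ 2 + algebraMap R 𝕜 β * z * E z ^ 3) z) (q : ℕ) :
    ∀ z ∈ U,
      iteratedDeriv q E z = E z ^ (q + 1) * aeval (z * E z) (iteratedDerivPoly α β q) := by
  induction q with
  | zero => simp [iteratedDerivPoly]
  | succ q ih =>
    intro z hz
    have hloc : iteratedDeriv q E =ᶠ[𝓝 z]
        fun z => E z ^ (q + 1) * aeval (z * E z) (iteratedDerivPoly α β q) :=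
      eventuallyEq_of_mem (hU.mem_nhds hz) ih
    rw [iteratedDeriv_succ, hloc.deriv_eq, (hasDerivAt_pow_mul_aeval (hE z hz) q _).deriv]
    rfl

theorem iteratedDeriv_eq_sum_coeff_iteratedDerivPoly {U : Set 𝕜} (hU : IsOpen U)
    (hE : ∀ z ∈ U, HasDerivAt E
      (algebraMap R 𝕜 α * E z ^ 2 + algebraMap R 𝕜 β * z * E z ^ 3) z) (q : ℕ) :
    ∀ z ∈ U, iteratedDeriv q E z = ∑ k ∈ range (q + 1),
      algebraMap R 𝕜 ((iteratedDerivPoly α β q).coeff k) * z ^ k * E z ^ (q + 1 + k) := by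
  intro z hz
  rw [iteratedDeriv_eq_pow_mul_aeval_iteratedDerivPoly hU hE q z hz,
    aeval_eq_sum_range' (Nat.lt_succ_of_le (natDegree_iteratedDerivPoly_le α β q)), mul_sum]
  refine sum_congr rfl fun k _ => ?_
  rw [Algebra.smul_def]
  ring

end PolynomialODE

theorem isOpen_cutPlane (p : ℕ) : IsOpen (cutPlane p) :=
  isOpen_compl_iff.mpr
    (Complex.isUniformEmbedding_ofReal.isClosedEmbedding.isClosedMap _ isClosed_Ici)

section FussCatalan

variable {𝕜 : Type*} [NontriviallyNormedField 𝕜] {p : ℕ} {T E : 𝕜 → 𝕜} {z : 𝕜}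

theorem hasDerivAt_of_fussCatalan_eq (hT : DifferentiableAt 𝕜 T z)
    (heq : ∀ᶠ y in 𝓝 z, y * T y ^ p - T y + 1 = 0) (hne : 1 - p * z * T z ^ (p - 1) ≠ 0) :
    HasDerivAt T (T z ^ p / (1 - p * z * T z ^ (p - 1))) z := by
  have hlhs := (((hasDerivAt_id' z).fun_mul (hT.hasDerivAt.fun_pow p)).fun_sub
    hT.hasDerivAt).add_const 1
  have hzero : T z ^ p + z * (p * T z ^ (p - 1) * deriv T z) - deriv T z = 0 := by
    simpa using hlhs.unique ((hasDerivAt_const z 0).congr_of_eventuallyEq heq)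
  refine hT.hasDerivAt.congr_deriv ?_
  rw [eq_div_iff hne]
  linear_combination -hzero

theorem hasDerivAt_fussCatalanE (hE : ∀ y, E y = T y ^ (p - 1) * (1 - p * y * T y ^ (p - 1))⁻¹)
    (hne : 1 - p * z * T z ^ (p - 1) ≠ 0)
    (hT : HasDerivAt T (T z ^ p / (1 - p * z * T z ^ (p - 1))) z) :
    HasDerivAt E
      (((p + (p - 1) : ℕ) : 𝕜) * E z ^ 2 + ((p * (p - 1) : ℕ) : 𝕜) * z * E z ^ 3) z := by
  have hpow : ((p - 1 : ℕ) : 𝕜) * T z ^ (p - 1 - 1) * T z ^ p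
      = (p - 1 : ℕ) * (T z ^ (p - 1)) ^ 2 := by
    rcases p with _ | _ | n
    · simp
    · simp
    · simp only [Nat.add_sub_cancel]
      ring
  have hs : HasDerivAt (fun y => T y ^ (p - 1))
      ((p - 1 : ℕ) * (T z ^ (p - 1)) ^ 2 / (1 - p * z * T z ^ (p - 1))) z := by
    refine (hT.fun_pow (p - 1)).congr_deriv ?_
    rw [← hpow]
    ring
  have hw := ((hasDerivAt_id' z).const_mul (p : 𝕜) |>.fun_mul hs).const_sub 1
  refine ((hs.fun_mul (hw.fun_inv hne)).congr_deriv ?_).congr_of_eventuallyEq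
    (Eventually.of_forall hE)
  rw [hE]
  push_cast
  generalize T z ^ (p - 1) = s at hne ⊢
  -- the form in which `field_simp` meets the denominator
  have hne' : 1 - s * p * z ≠ 0 := by rwa [mul_comm s, mul_right_comm]
  field_simp
  ring

end FussCatalan

theorem fussCatalan_E_iteratedDeriv_structure_general (p : ℕ) (T E : ℂ → ℂ)
    (hT : AnalyticOnNhd ℂ T (cutPlane p))
    (heq : ∀ z ∈ cutPlane p, z * T z ^ p - T z + 1 = 0)
    (hne : ∀ z ∈ cutPlane p, 1 - (p : ℂ) * z * T z ^ (p - 1) ≠ 0)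
    (hE : ∀ z : ℂ, E z = T z ^ (p - 1) * (1 - (p : ℂ) * z * T z ^ (p - 1))⁻¹) :
    ∃ K : ℝ, 0 < K ∧ ∀ q : ℕ, 1 ≤ q →
      ∃ a : ℕ → ℝ,
        (∑ k ∈ Finset.range (q + 1), |a k|) ≤ K ^ q * (Nat.factorial q : ℝ) ∧
        ∀ z ∈ cutPlane p,
          iteratedDeriv q E z
            = ∑ k ∈ Finset.range (q + 1), (a k : ℂ) * z ^ k * E z ^ (q + 1 + k) := by
  set α : ℝ := ((p + (p - 1) : ℕ) : ℝ)
  set β : ℝ := ((p * (p - 1) : ℕ) : ℝ)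
  have hODE : ∀ z ∈ cutPlane p, HasDerivAt E
      (algebraMap ℝ ℂ α * E z ^ 2 + algebraMap ℝ ℂ β * z * E z ^ 3) z := fun z hz => by
    have hTz := hasDerivAt_of_fussCatalan_eq (hT z hz).differentiableAt
      (eventually_of_mem ((isOpen_cutPlane p).mem_nhds hz) heq) (hne z hz)
    simpa [α, β] using hasDerivAt_fussCatalanE hE (hne z hz) hTz
  refine ⟨1 + 2 * |α| + 2 * |β|, by positivity,
    fun q _ => ⟨(iteratedDerivPoly α β q).coeff, ?_, ?_⟩⟩
  · rw [← l1Norm_eq_sum_range (Nat.lt_succ_of_le (natDegree_iteratedDerivPoly_le α β q))]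
    exact l1Norm_iteratedDerivPoly_le α β q
  · simpa using iteratedDeriv_eq_sum_coeff_iteratedDerivPoly (isOpen_cutPlane p) hODE q

/-- Let `T` be analytic on `Ω_p` with `z T(z)^p − T(z) + 1 = 0` and
`1 − p z T(z)^{p−1} ≠ 0` there; set `F(z) = 1/(1 − p z T(z)^{p−1})` and
`E(z) = T(z)^{p−1} F(z)`.  Then there is `K > 0` (depending only on `p`) such that for
every `q ≥ 1` there are reals `a_{q,0}, …, a_{q,q}` with `Σ_k |a_{q,k}| ≤ K^q q!` and
`E^{(q)}(z) = Σ_{k=0}^{q} a_{q,k} z^k E(z)^{q+1+k}` on `Ω_p`. -/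
theorem fussCatalan_E_iteratedDeriv_structure (p : ℕ) (hp : 2 ≤ p) (T E : ℂ → ℂ)
    (hT : AnalyticOnNhd ℂ T (cutPlane p))
    (heq : ∀ z ∈ cutPlane p, z * T z ^ p - T z + 1 = 0)
    (hne : ∀ z ∈ cutPlane p, 1 - (p : ℂ) * z * T z ^ (p - 1) ≠ 0)
    (hE : ∀ z : ℂ, E z = T z ^ (p - 1) * (1 - (p : ℂ) * z * T z ^ (p - 1))⁻¹) :
    ∃ K : ℝ, 0 < K ∧ ∀ q : ℕ, 1 ≤ q →
      ∃ a : ℕ → ℝ,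
        (∑ k ∈ Finset.range (q + 1), |a k|) ≤ K ^ q * (Nat.factorial q : ℝ) ∧
        ∀ z ∈ cutPlane p,
          iteratedDeriv q E z
            = ∑ k ∈ Finset.range (q + 1), (a k : ℂ) * z ^ k * E z ^ (q + 1 + k) :=
  fussCatalan_E_iteratedDeriv_structure_general p T E hT heq hne hE
end

section
/- For every integer p ≥ 2, the series Σ_{n≥0} C_n^{(p)} · R_p^n (evaluated at the radius of convergence R_p = (p−1)^{p−1}/p^p) converges and its sum equals p/(p−1). -/
/-- The (real) Fuss–Catalan numbers of order `p`: `C_n^{(p)} = binom(pn, n) / ((p-1)n + 1)`. -/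
noncomputable def fussCatalanReal (p n : ℕ) : ℝ :=
  ((p * n).choose n : ℝ) / (((p - 1) * n + 1 : ℕ) : ℝ)

/-! The Raney numbers are the coefficients of `B ^ j`, where `B = ∑ C_n^{(p)} zⁿ` solves
`B = 1 + z B ^ p`; a Pascal-type recurrence for them gives the coefficientwise identity
`B ^ j * B = B ^ (j + 1)`. As all coefficients are nonnegative, the partial sums of `B ^ j` at
`x ≥ 0` are at most the `j`-th power of those of `B`, so by induction the partial sums of `B` at
`x` are bounded by any `c ≥ 0` with `1 + x c ^ p ≤ c`. At `x = R_p` this holds with equality for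
`c = p / (p - 1)`; hence the series converges and its sum `S ≥ 0` satisfies `S = 1 + R_p S ^ p`.
The tangent to `s ↦ 1 + R_p s ^ p` at `c` is the diagonal, so by strict convexity `c` is the only
nonnegative fixed point. -/

open Finset

theorem pow_add_mul_lt_add_pow {a b : ℝ} (ha : 0 < a) (hb : b ≠ 0) (hab : 0 ≤ a + b) {n : ℕ}
    (hn : 2 ≤ n) : a ^ n + n * a ^ (n - 1) * b < (a + b) ^ n := by
  have hbern : 1 + (n : ℝ) * (b / a) < (1 + b / a) ^ (n : ℝ) :=
    one_add_mul_self_lt_rpow_one_add (by rw [le_div_iff₀ ha]; linarith)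
      (div_ne_zero hb ha.ne') (by exact_mod_cast hn)
  rw [Real.rpow_natCast] at hbern
  have hsplit : a ^ n = a ^ (n - 1) * a := by rw [← pow_succ, Nat.sub_add_cancel (by omega)]
  calc a ^ n + n * a ^ (n - 1) * b = a ^ n * (1 + n * (b / a)) := by
        rw [hsplit]; field_simp
    _ < a ^ n * (1 + b / a) ^ n := by gcongr
    _ = (a + b) ^ n := by rw [← mul_pow]; congr 1; field_simp

theorem sum_range_sum_antidiagonal_le_mul {R : Type*} [Semiring R] [PartialOrder R]
    [IsOrderedRing R] {f g : ℕ → R} (hf : 0 ≤ f) (hg : 0 ≤ g) (N : ℕ) :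
    ∑ n ∈ range N, ∑ kl ∈ antidiagonal n, f kl.1 * g kl.2 ≤
      (∑ n ∈ range N, f n) * ∑ n ∈ range N, g n := by
  simp_rw [Nat.sum_antidiagonal_eq_sum_range_succ (fun k l => f k * g l)]
  rw [sum_range_diag_flip N (fun k l => f k * g l), sum_mul_sum]
  gcongr with k
  · exact fun l _ _ => mul_nonneg (hf k) (hg l)
  · exact Nat.sub_le N k

/-- The Raney numbers `j / (p n + j) * C(p n + j, n)` for `p = q + 1`, in the division-free form
`C(p n + j - 1, n) - (p - 1) C(p n + j - 1, n - 1)`. -/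
noncomputable def raney (q j : ℕ) : ℕ → ℝ
  | 0 => 1
  | n + 1 =>
    ((q * (n + 1) + n + j).choose (n + 1) : ℝ) - q * ((q * (n + 1) + n + j).choose n : ℝ)

@[simp] theorem raney_zero_right (q j : ℕ) : raney q j 0 = 1 := rfl

theorem raney_zero_succ (q n : ℕ) : raney q 0 (n + 1) = 0 := by
  have h := Nat.choose_succ_right_eq (q * (n + 1) + n) n
  rw [show q * (n + 1) + n - n = q * (n + 1) by omega] at h
  have h' : ((q * (n + 1) + n).choose (n + 1) : ℝ) * (n + 1) =
      ((q * (n + 1) + n).choose n : ℝ) * (q * (n + 1)) := by exact_mod_cast h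
  rw [raney, sub_eq_zero, add_zero]
  have : (n : ℝ) + 1 ≠ 0 := by positivity
  apply mul_right_cancel₀ this
  linear_combination h'

theorem raney_succ_succ (q j n : ℕ) :
    raney q (j + 1) (n + 1) = raney q j (n + 1) + raney q (j + q + 1) n := by
  cases n with
  | zero => simp [raney]
  | succ m =>
    simp only [raney]
    rw [show q * (m + 1 + 1) + (m + 1) + (j + 1) = (q * (m + 1 + 1) + (m + 1) + j) + 1 by ring,
      show q * (m + 1) + m + (j + q + 1) = q * (m + 1 + 1) + (m + 1) + j by ring,
      Nat.choose_succ_succ', Nat.choose_succ_succ' _ m]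
    push_cast
    ring

theorem raney_one_succ (q n : ℕ) : raney q 1 (n + 1) = raney q (q + 1) n := by
  simpa [raney_zero_succ] using raney_succ_succ q 0 n

theorem raney_nonneg (q j n : ℕ) : 0 ≤ raney q j n := by
  induction n generalizing j with
  | zero => simp
  | succ n ihn =>
    induction j with
    | zero => rw [raney_zero_succ]
    | succ j ihj => rw [raney_succ_succ]; exact add_nonneg ihj (ihn _)

theorem sum_antidiagonal_raney_mul_raney_one (q j n : ℕ) :
    ∑ kl ∈ antidiagonal n, raney q j kl.1 * raney q 1 kl.2 = raney q (j + 1) n := by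
  induction n generalizing j with
  | zero => simp
  | succ n ihn =>
    induction j with
    | zero => simp [Nat.sum_antidiagonal_succ, raney_zero_succ]
    | succ j ihj =>
      rw [Nat.sum_antidiagonal_succ] at ihj ⊢
      simp only [raney_succ_succ, add_mul, sum_add_distrib, ihn, raney_zero_right] at ihj ⊢
      rw [← ihj, show j + 1 + q + 1 = j + q + 1 + 1 by ring]
      ring

theorem raney_one_eq_fussCatalanReal (q n : ℕ) : raney q 1 n = fussCatalanReal (q + 1) n := by
  cases n with
  | zero => simp [fussCatalanReal]
  | succ n =>
    have h := Nat.choose_succ_right_eq ((q + 1) * (n + 1)) n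
    rw [show (q + 1) * (n + 1) - n = q * (n + 1) + 1 by ring_nf; omega] at h
    have h' : (((q + 1) * (n + 1)).choose (n + 1) : ℝ) * (n + 1) =
        (((q + 1) * (n + 1)).choose n : ℝ) * (q * (n + 1) + 1) := by exact_mod_cast h
    rw [raney, fussCatalanReal, Nat.add_sub_cancel, eq_div_iff (by positivity),
      show q * (n + 1) + n + 1 = (q + 1) * (n + 1) by ring]
    push_cast
    linear_combination (q : ℝ) * h'

theorem sum_antidiagonal_raney_mul_pow (q j n : ℕ) (x : ℝ) :
    ∑ kl ∈ antidiagonal n, raney q j kl.1 * x ^ kl.1 * (raney q 1 kl.2 * x ^ kl.2) =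
      raney q (j + 1) n * x ^ n := by
  rw [← sum_antidiagonal_raney_mul_raney_one, sum_mul]
  refine sum_congr rfl fun kl hkl => ?_
  rw [← mem_antidiagonal.mp hkl, pow_add]
  ring

section Series

variable {q : ℕ} {x : ℝ}

theorem raney_mul_pow_nonneg (hx : 0 ≤ x) (j n : ℕ) : 0 ≤ raney q j n * x ^ n :=
  mul_nonneg (raney_nonneg q j n) (pow_nonneg hx n)

theorem sum_range_raney_mul_pow_le_pow (hx : 0 ≤ x) (j N : ℕ) :
    ∑ n ∈ range N, raney q (j + 1) n * x ^ n ≤ (∑ n ∈ range N, raney q 1 n * x ^ n) ^ (j + 1) := by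
  induction j with
  | zero => rw [zero_add, pow_one]
  | succ j ih =>
    simp_rw [← sum_antidiagonal_raney_mul_pow q (j + 1)]
    calc _ ≤ (∑ n ∈ range N, raney q (j + 1) n * x ^ n) * ∑ n ∈ range N, raney q 1 n * x ^ n :=
          sum_range_sum_antidiagonal_le_mul (raney_mul_pow_nonneg hx _)
            (raney_mul_pow_nonneg hx 1) N
      _ ≤ _ := by rw [pow_succ]; gcongr; exact sum_nonneg fun n _ => raney_mul_pow_nonneg hx 1 n

theorem sum_range_raney_one_mul_pow_le {c : ℝ} (hx : 0 ≤ x) (hc : 0 ≤ c)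
    (hxc : 1 + x * c ^ (q + 1) ≤ c) (N : ℕ) : ∑ n ∈ range N, raney q 1 n * x ^ n ≤ c := by
  induction N with
  | zero => simpa using hc
  | succ N ih =>
    calc ∑ n ∈ range (N + 1), raney q 1 n * x ^ n
        = 1 + x * ∑ n ∈ range N, raney q (q + 1) n * x ^ n := by
          rw [sum_range_succ', mul_sum]
          simp only [raney_one_succ, raney_zero_right, pow_zero, mul_one, pow_succ]
          rw [add_comm]
          exact congrArg _ (sum_congr rfl fun n _ => by ring)
      _ ≤ 1 + x * (∑ n ∈ range N, raney q 1 n * x ^ n) ^ (q + 1) := by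
          gcongr; exact sum_range_raney_mul_pow_le_pow hx q N
      _ ≤ 1 + x * c ^ (q + 1) := by
          gcongr
          exact sum_nonneg fun n _ => raney_mul_pow_nonneg hx 1 n
      _ ≤ c := hxc

theorem summable_raney_one_mul_pow {c : ℝ} (hx : 0 ≤ x) (hc : 0 ≤ c)
    (hxc : 1 + x * c ^ (q + 1) ≤ c) : Summable fun n => raney q 1 n * x ^ n :=
  summable_of_sum_range_le (raney_mul_pow_nonneg hx 1)
    (sum_range_raney_one_mul_pow_le hx hc hxc)

theorem hasSum_raney_mul_pow (hx : 0 ≤ x) (hs : Summable fun n => raney q 1 n * x ^ n) (j : ℕ) :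
    HasSum (fun n => raney q (j + 1) n * x ^ n) ((∑' n, raney q 1 n * x ^ n) ^ (j + 1)) := by
  induction j with
  | zero => simpa using hs.hasSum
  | succ j ih =>
    have hprod :=
      ih.summable.mul_of_nonneg hs (raney_mul_pow_nonneg hx _) (raney_mul_pow_nonneg hx 1)
    have hcauchy := ih.summable.tsum_mul_tsum_eq_tsum_sum_antidiagonal hs hprod
    simp only [sum_antidiagonal_raney_mul_pow] at hcauchy
    rw [ih.tsum_eq, ← pow_succ] at hcauchy
    have hsum := summable_sum_mul_antidiagonal_of_summable_mul (A := ℕ)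
      (f := fun n => raney q (j + 1) n * x ^ n) (g := fun n => raney q 1 n * x ^ n) hprod
    simp only [sum_antidiagonal_raney_mul_pow] at hsum
    rw [hcauchy]
    exact hsum.hasSum

theorem tsum_raney_one_mul_pow (hx : 0 ≤ x) (hs : Summable fun n => raney q 1 n * x ^ n) :
    ∑' n, raney q 1 n * x ^ n = 1 + x * (∑' n, raney q 1 n * x ^ n) ^ (q + 1) := by
  conv_lhs => rw [hs.tsum_eq_zero_add]
  rw [← (hasSum_raney_mul_pow hx hs q).tsum_eq, ← tsum_mul_left]
  simp only [raney_one_succ, raney_zero_right, pow_zero, mul_one, pow_succ]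
  exact congrArg _ (tsum_congr fun n => by ring)

end Series

theorem Rp_succ (q : ℕ) : Rp (q + 1) = (q : ℝ) ^ q / ((q : ℝ) + 1) ^ (q + 1) := by
  simp [Rp]

theorem Rp_succ_mul_pow {q : ℕ} (hq : q ≠ 0) :
    Rp (q + 1) * (((q : ℝ) + 1) / q) ^ q = 1 / ((q : ℝ) + 1) := by
  rw [Rp_succ, div_pow, pow_succ]
  field_simp

theorem eq_of_eq_one_add_Rp_mul_pow {q : ℕ} (hq : q ≠ 0) {s : ℝ} (hs : 0 ≤ s)
    (h : s = 1 + Rp (q + 1) * s ^ (q + 1)) : s = ((q : ℝ) + 1) / q := by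
  set c : ℝ := ((q : ℝ) + 1) / q
  by_contra hne
  have hc : 0 < c := by positivity
  have hqc : (q : ℝ) * c = q + 1 := by simp only [c]; field_simp
  have hR : 0 < Rp (q + 1) := by rw [Rp_succ]; positivity
  have htangent : c ^ (q + 1) + (q + 1 : ℕ) * c ^ q * (s - c) < s ^ (q + 1) := by
    simpa using
      pow_add_mul_lt_add_pow hc (sub_ne_zero.mpr hne) (by linarith) (n := q + 1) (by omega)
  have hline : Rp (q + 1) * (c ^ (q + 1) + (q + 1 : ℕ) * c ^ q * (s - c)) = s - 1 := by
    rw [show Rp (q + 1) * (c ^ (q + 1) + (q + 1 : ℕ) * c ^ q * (s - c)) =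
      Rp (q + 1) * c ^ q * (c + (q + 1) * (s - c)) by push_cast; ring, Rp_succ_mul_pow hq]
    field_simp
    linear_combination -hqc
  nlinarith [mul_lt_mul_of_pos_left htangent hR]

/-- For every integer `p ≥ 2`, the series `Σ_{n ≥ 0} C_n^{(p)} R_p^n` (evaluated at the
radius of convergence `R_p`) converges, with sum `p/(p−1)`. -/
theorem fussCatalan_sum_at_radius (p : ℕ) (hp : 2 ≤ p) :
    Summable (fun n : ℕ => fussCatalanReal p n * Rp p ^ n) ∧
    (∑' n : ℕ, fussCatalanReal p n * Rp p ^ n) = (p : ℝ) / ((p : ℝ) - 1) := by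
  obtain ⟨q, rfl⟩ : ∃ q, p = q + 1 := ⟨p - 1, by omega⟩
  have hq : q ≠ 0 := by omega
  have hR : 0 ≤ Rp (q + 1) := by rw [Rp_succ]; positivity
  have hfix : 1 + Rp (q + 1) * (((q : ℝ) + 1) / q) ^ (q + 1) = ((q : ℝ) + 1) / q := by
    rw [pow_succ, ← mul_assoc, Rp_succ_mul_pow hq]
    field_simp
  have hs := summable_raney_one_mul_pow hR (by positivity) hfix.le
  simp only [← raney_one_eq_fussCatalanReal]
  refine ⟨hs, ?_⟩
  push_cast
  rw [add_sub_cancel_right]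
  exact eq_of_eq_one_add_Rp_mul_pow hq (tsum_nonneg (raney_mul_pow_nonneg hR 1))
    (tsum_raney_one_mul_pow hR hs)
end
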